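/- In the algebra Mat(K) of block matrices A = (A_{i,j})_{i,j≥0} with A_{i,j}: Sym^j(K^m) → Sym^i(K^n), equipped with the product (A ⊙ B)_{i,j} = ∑_{0≤i_1≤i, 0≤j_1≤j} C(j,j_1) A_{i_1,j_1} ⊙ B_{i-i_1,j-j_1}, the operation ⊙ is commutative and associative, the matrix 1 with (1)_{0,0} = 1_K and all other blocks zero is the identity, and the algebra has no zero divisors (A ⊙ B = 0 implies A = 0 or B = 0). -/

import Mathlib

/-- Multi-indices of degree `k` in `n` variables: the monomial basis of `Sym^k(K^n)`. -/
abbrev Idx (n k : ℕ) := {d : Fin n → Fin (k + 1) // ∑ i, (d i : ℕ) = k}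

/-- Symmetric (monomial) product of two vectors in symmetric powers of `K^n`. -/
def vmul {K : Type} [Field K] {n a b : ℕ} (x : Idx n a → K) (y : Idx n b → K) :
    Idx n (a + b) → K :=
  fun r => ∑ p : Idx n a, ∑ q : Idx n b,
    if (∀ c, (p.1 c : ℕ) + (q.1 c : ℕ) = (r.1 c : ℕ)) then x p * y q else 0

/-- The generalized symmetric product of finite matrices between symmetric powers. -/
def msym {K : Type} [Field K] {n i1 j1 i2 j2 : ℕ}
    (A : Matrix (Idx n i1) (Idx n j1) K) (B : Matrix (Idx n i2) (Idx n j2) K) :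
    Matrix (Idx n (i1 + i2)) (Idx n (j1 + j2)) K :=
  Matrix.of fun r k =>
    (((j1 + j2).choose j1 : K))⁻¹ *
      ∑ p : Idx n j1, ∑ q : Idx n j2,
        if (∀ c, (p.1 c : ℕ) + (q.1 c : ℕ) = (k.1 c : ℕ))
        then (∏ c, ((k.1 c : ℕ).choose (p.1 c : ℕ) : K)) *
          vmul (fun a => A a p) (fun b => B b q) r
        else 0

/-- Degree-cast of a matrix between symmetric powers. -/
def castM {K : Type} [Field K] {n a b a' b' : ℕ} (h1 : a = a') (h2 : b = b')
    (M : Matrix (Idx n a) (Idx n b) K) : Matrix (Idx n a') (Idx n b') K :=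
  Matrix.reindex (Equiv.cast (congrArg (Idx n) h1)) (Equiv.cast (congrArg (Idx n) h2)) M

/-- The algebra `Mat(K)` of infinite block matrices `A = (A_{i,j})_{i,j ≥ 0}` with
`A_{i,j} : Sym^j(K^n) → Sym^i(K^n)`. -/
abbrev BlockMat (K : Type) [Field K] (n : ℕ) :=
  ∀ i j : ℕ, Matrix (Idx n i) (Idx n j) K

/-- The convolution-type symmetric product on `Mat(K)`:
`(A ⊙ B)_{i,j} = ∑_{i₁ ≤ i, j₁ ≤ j} C(j,j₁) A_{i₁,j₁} ⊙ B_{i-i₁,j-j₁}`. -/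
def bprod {K : Type} [Field K] {n : ℕ} (A B : BlockMat K n) : BlockMat K n :=
  fun i j => ∑ i1 : Fin (i + 1), ∑ j1 : Fin (j + 1),
    (j.choose j1 : K) •
      castM (Nat.add_sub_cancel' (Nat.lt_succ_iff.mp i1.isLt))
        (Nat.add_sub_cancel' (Nat.lt_succ_iff.mp j1.isLt))
        (msym (A i1 j1) (B (i - i1) (j - j1)))

/-- The identity element of `(Mat(K), +, ⊙)`: zero everywhere except the `(0,0)`
block, which is `1_K`. -/
def bone {K : Type} [Field K] (n : ℕ) : BlockMat K n :=
  fun i j =>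
    if h : i = 0 ∧ j = 0
    then castM h.1.symm h.2.symm (1 : Matrix (Idx n 0) (Idx n 0) K)
    else 0

/-!
Send a block matrix `A` to the power series `Φ(A) = ∑ A_{i,j}(r, k) x^r y^k / k!` in the
variables `x_1, …, x_n, y_1, …, y_n`. This is a `K`-linear injection with `Φ(1) = 1`, and
`Φ(A ⊙ B) = Φ(A) Φ(B)`: in `(A ⊙ B)_{i,j}` the factor `C(j, j₁)` cancels the normalisation of the
symmetric product, and the remaining coefficients `∏_c C(k_c, p_c)` are those of a product of
exponential series in `y`. So `Mat(K)` embeds into a power series ring over a field, a commutative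
integral domain.
-/

open Finset

namespace Idx

variable {n : ℕ}

lemma ext {a : ℕ} {d e : Idx n a} (h : ∀ c, (d.1 c : ℕ) = e.1 c) : d = e :=
  Subtype.ext (funext fun c => Fin.ext (h c))

def cast {a a' : ℕ} (h : a = a') (d : Idx n a) : Idx n a' := h ▸ d

@[simp] lemma cast_val {a a' : ℕ} (h : a = a') (d : Idx n a) (c : Fin n) :
    ((cast h d).1 c : ℕ) = d.1 c := by
  subst h; rfl

def ofFun (f : Fin n → ℕ) : Idx n (∑ c, f c) :=
  ⟨fun c => ⟨f c, Nat.lt_succ_of_le (single_le_sum (fun _ _ => Nat.zero_le _) (mem_univ c))⟩,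
    rfl⟩

end Idx

lemma castM_apply {K : Type} [Field K] {n a b a' b' : ℕ} (h1 : a = a') (h2 : b = b')
    (M : Matrix (Idx n a) (Idx n b) K) (r : Idx n a') (k : Idx n b') :
    castM h1 h2 M r k = M (Idx.cast h1.symm r) (Idx.cast h2.symm k) := by
  subst h1 h2; rfl

section Factorial

variable {K : Type*} [Field K] [CharZero K] {ι : Type*} [Fintype ι]

lemma prod_factorial_ne_zero (f : ι → ℕ) :
    (∏ c, ((f c).factorial : K)) ≠ 0 := by
  simp [prod_ne_zero_iff, Nat.factorial_ne_zero]

lemma inv_prod_factorial_add_mul (f g : ι → ℕ) (a b : K) :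
    (∏ c, ((f c + g c).factorial : K))⁻¹ * ((∏ c, ((f c + g c).choose (f c) : K)) * (a * b)) =
      (∏ c, ((f c).factorial : K))⁻¹ * a * ((∏ c, ((g c).factorial : K))⁻¹ * b) := by
  have hfac : ∏ c, ((f c + g c).factorial : K) = (∏ c, ((f c + g c).choose (f c) : K)) *
      ((∏ c, ((f c).factorial : K)) * ∏ c, ((g c).factorial : K)) := by
    rw [← prod_mul_distrib, ← prod_mul_distrib]
    refine prod_congr rfl fun c _ => ?_
    rw [← mul_assoc]
    have h := Nat.choose_mul_factorial_mul_factorial (Nat.le_add_right (f c) (g c))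
    rw [Nat.add_sub_cancel_left] at h
    exact_mod_cast h.symm
  have hchoose : ∏ c, ((f c + g c).choose (f c) : K) ≠ 0 :=
    prod_ne_zero_iff.mpr fun _ _ =>
      Nat.cast_ne_zero.mpr (Nat.choose_pos (Nat.le_add_right _ _)).ne'
  rw [hfac]
  field_simp

end Factorial

namespace BlockMat

variable {K : Type} [Field K] {n : ℕ}

lemma entry_congr (A : BlockMat K n) {i i' j j' : ℕ} (hi : i = i') (hj : j = j')
    {r : Idx n i} {r' : Idx n i'} {k : Idx n j} {k' : Idx n j'}
    (hr : ∀ c, (r.1 c : ℕ) = r'.1 c) (hk : ∀ c, (k.1 c : ℕ) = k'.1 c) :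
    A i j r k = A i' j' r' k' := by
  subst hi hj; rw [Idx.ext hr, Idx.ext hk]

/-- The exponent of the monomial `x^r y^k`. -/
noncomputable def exponent {i j : ℕ} (r : Idx n i) (k : Idx n j) : (Fin n ⊕ Fin n) →₀ ℕ :=
  Finsupp.equivFunOnFinite.symm (Sum.elim (fun c => (r.1 c : ℕ)) fun c => (k.1 c : ℕ))

@[simp] lemma exponent_inl {i j : ℕ} (r : Idx n i) (k : Idx n j) (c : Fin n) :
    exponent r k (Sum.inl c) = r.1 c := rfl

@[simp] lemma exponent_inr {i j : ℕ} (r : Idx n i) (k : Idx n j) (c : Fin n) :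
    exponent r k (Sum.inr c) = k.1 c := rfl

def rowDeg (m : (Fin n ⊕ Fin n) →₀ ℕ) : ℕ := ∑ c, m (Sum.inl c)

def colDeg (m : (Fin n ⊕ Fin n) →₀ ℕ) : ℕ := ∑ c, m (Sum.inr c)

def rowIdx (m : (Fin n ⊕ Fin n) →₀ ℕ) : Idx n (rowDeg m) := Idx.ofFun fun c => m (Sum.inl c)

def colIdx (m : (Fin n ⊕ Fin n) →₀ ℕ) : Idx n (colDeg m) := Idx.ofFun fun c => m (Sum.inr c)

@[simp] lemma rowIdx_val (m : (Fin n ⊕ Fin n) →₀ ℕ) (c : Fin n) :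
    ((rowIdx m).1 c : ℕ) = m (Sum.inl c) := rfl

@[simp] lemma colIdx_val (m : (Fin n ⊕ Fin n) →₀ ℕ) (c : Fin n) :
    ((colIdx m).1 c : ℕ) = m (Sum.inr c) := rfl

@[simp] lemma rowDeg_exponent {i j : ℕ} (r : Idx n i) (k : Idx n j) : rowDeg (exponent r k) = i :=
  r.2

@[simp] lemma colDeg_exponent {i j : ℕ} (r : Idx n i) (k : Idx n j) : colDeg (exponent r k) = j :=
  k.2

lemma rowDeg_add (m m' : (Fin n ⊕ Fin n) →₀ ℕ) : rowDeg (m + m') = rowDeg m + rowDeg m' :=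
  sum_add_distrib

lemma colDeg_add (m m' : (Fin n ⊕ Fin n) →₀ ℕ) : colDeg (m + m') = colDeg m + colDeg m' :=
  sum_add_distrib

lemma exists_exponent_eq (m : (Fin n ⊕ Fin n) →₀ ℕ) :
    ∃ i j, ∃ (r : Idx n i) (k : Idx n j), exponent r k = m :=
  ⟨_, _, rowIdx m, colIdx m, by ext (c | c) <;> rfl⟩

noncomputable def toMvPowerSeries : BlockMat K n →ₗ[K] MvPowerSeries (Fin n ⊕ Fin n) K where
  toFun A m :=
    (∏ c, ((m (Sum.inr c)).factorial : K))⁻¹ * A (rowDeg m) (colDeg m) (rowIdx m) (colIdx m)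
  map_add' _ _ := funext fun _ => mul_add _ _ _
  map_smul' _ _ := funext fun _ => mul_left_comm _ _ _

lemma coeff_toMvPowerSeries (A : BlockMat K n) {i j : ℕ} (r : Idx n i) (k : Idx n j) :
    MvPowerSeries.coeff (exponent r k) (toMvPowerSeries A) =
      (∏ c, ((k.1 c : ℕ).factorial : K))⁻¹ * A i j r k := by
  rw [MvPowerSeries.coeff_apply]
  exact congrArg _ (entry_congr A (rowDeg_exponent r k) (colDeg_exponent r k) (by simp) (by simp))

lemma toMvPowerSeries_injective [CharZero K] :
    Function.Injective (toMvPowerSeries : BlockMat K n →ₗ[K] _) := by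
  intro A B h
  funext i j
  ext r k
  have hrk := congrArg (MvPowerSeries.coeff (exponent r k)) h
  rwa [coeff_toMvPowerSeries, coeff_toMvPowerSeries,
    mul_right_inj' (inv_ne_zero (prod_factorial_ne_zero _))] at hrk

lemma toMvPowerSeries_bone : toMvPowerSeries (bone n : BlockMat K n) = 1 := by
  ext m
  obtain ⟨i, j, r, k, rfl⟩ := exists_exponent_eq m
  rw [coeff_toMvPowerSeries, MvPowerSeries.coeff_one]
  by_cases hij : i = 0 ∧ j = 0
  · obtain ⟨rfl, rfl⟩ := hij
    have h0 : exponent r k = 0 := by ext (c | c) <;> simp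
    have hrk : Idx.cast rfl r = Idx.cast rfl k := Idx.ext fun c => by simp
    rw [if_pos h0, bone, dif_pos ⟨rfl, rfl⟩, castM_apply, hrk]
    simp
  · have h0 : exponent r k ≠ 0 := fun h0 =>
      hij ⟨by simpa [h0, rowDeg, eq_comm] using rowDeg_exponent r k,
        by simpa [h0, colDeg, eq_comm] using colDeg_exponent r k⟩
    rw [if_neg h0, bone, dif_neg hij]
    simp

lemma degrees_of_mem_antidiagonal {i j : ℕ} {r : Idx n i} {k : Idx n j}
    {x : ((Fin n ⊕ Fin n) →₀ ℕ) × ((Fin n ⊕ Fin n) →₀ ℕ)}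
    (hx : x ∈ HasAntidiagonal.antidiagonal (exponent r k)) :
    rowDeg x.1 + rowDeg x.2 = i ∧ colDeg x.1 + colDeg x.2 = j := by
  have hsum := HasAntidiagonal.mem_antidiagonal.mp hx
  rw [← rowDeg_add, ← colDeg_add, hsum, rowDeg_exponent, colDeg_exponent]
  exact ⟨rfl, rfl⟩

lemma degrees_of_mem_antidiagonal_fiber {i j : ℕ} {r : Idx n i} {k : Idx n j} {i₁ j₁ : ℕ}
    {x : ((Fin n ⊕ Fin n) →₀ ℕ) × ((Fin n ⊕ Fin n) →₀ ℕ)}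
    (hx : x ∈ {x ∈ HasAntidiagonal.antidiagonal (exponent r k) |
      (rowDeg x.1, colDeg x.1) = (i₁, j₁)}) :
    rowDeg x.1 = i₁ ∧ colDeg x.1 = j₁ ∧ rowDeg x.2 = i - i₁ ∧ colDeg x.2 = j - j₁ := by
  obtain ⟨hsum, hdeg⟩ := mem_filter.mp hx
  obtain ⟨rfl, rfl⟩ := Prod.mk.inj hdeg
  have := degrees_of_mem_antidiagonal hsum
  omega

lemma sum_antidiagonal_fiber {M : Type*} [AddCommMonoid M]
    (F : ((Fin n ⊕ Fin n) →₀ ℕ) → ((Fin n ⊕ Fin n) →₀ ℕ) → M)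
    {i j : ℕ} (r : Idx n i) (k : Idx n j) (i₁ j₁ : ℕ) :
    ∑ x ∈ HasAntidiagonal.antidiagonal (exponent r k) with (rowDeg x.1, colDeg x.1) = (i₁, j₁),
        F x.1 x.2 =
      ∑ p : Idx n j₁, ∑ q : Idx n (j - j₁), ∑ p' : Idx n i₁, ∑ q' : Idx n (i - i₁),
        if (∀ c, (p.1 c : ℕ) + q.1 c = k.1 c) ∧ (∀ c, (p'.1 c : ℕ) + q'.1 c = r.1 c)
        then F (exponent p' p) (exponent q' q) else 0 := by
  simp only [← Fintype.sum_prod_type']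
  rw [← sum_filter]
  symm
  refine sum_bij' (fun y _ => (exponent y.2.2.1 y.1, exponent y.2.2.2 y.2.1))
    (fun x hx =>
      have hdeg := degrees_of_mem_antidiagonal_fiber hx
      (Idx.cast hdeg.2.1 (colIdx x.1), Idx.cast hdeg.2.2.2 (colIdx x.2),
        Idx.cast hdeg.1 (rowIdx x.1), Idx.cast hdeg.2.2.1 (rowIdx x.2)))
    ?_ ?_ ?_ ?_ fun _ _ => rfl
  · rintro ⟨p, q, p', q'⟩ hy
    obtain ⟨hk, hr⟩ := (mem_filter.mp hy).2
    refine mem_filter.mpr ⟨HasAntidiagonal.mem_antidiagonal.mpr ?_, by simp⟩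
    ext (c | c) <;> simp [hk, hr]
  · rintro x hx
    have hsum := fun s => DFunLike.congr_fun
      (HasAntidiagonal.mem_antidiagonal.mp (mem_filter.mp hx).1) s
    refine mem_filter.mpr ⟨mem_univ _, fun c => ?_, fun c => ?_⟩
    · simpa using hsum (Sum.inr c)
    · simpa using hsum (Sum.inl c)
  · rintro ⟨p, q, p', q'⟩ _
    simp only [Prod.mk.injEq]
    refine ⟨?_, ?_, ?_, ?_⟩ <;> exact Idx.ext fun c => by simp
  · rintro x _
    ext (c | c) <;> simp

lemma sum_antidiagonal_exponent {M : Type*} [AddCommMonoid M]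
    (F : ((Fin n ⊕ Fin n) →₀ ℕ) → ((Fin n ⊕ Fin n) →₀ ℕ) → M)
    {i j : ℕ} (r : Idx n i) (k : Idx n j) :
    ∑ x ∈ HasAntidiagonal.antidiagonal (exponent r k), F x.1 x.2 =
      ∑ i₁ : Fin (i + 1), ∑ j₁ : Fin (j + 1),
        ∑ p : Idx n j₁, ∑ q : Idx n (j - j₁), ∑ p' : Idx n i₁, ∑ q' : Idx n (i - i₁),
          if (∀ c, (p.1 c : ℕ) + q.1 c = k.1 c) ∧ (∀ c, (p'.1 c : ℕ) + q'.1 c = r.1 c)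
          then F (exponent p' p) (exponent q' q) else 0 := by
  have hmaps : ∀ x ∈ HasAntidiagonal.antidiagonal (exponent r k),
      (rowDeg x.1, colDeg x.1) ∈ range (i + 1) ×ˢ range (j + 1) := by
    intro x hx
    have := degrees_of_mem_antidiagonal hx
    simp only [mem_product, mem_range]
    omega
  rw [← sum_fiberwise_of_maps_to hmaps, sum_product, sum_range]
  simp only [sum_range, sum_antidiagonal_fiber]

lemma bprod_apply [CharZero K] (A B : BlockMat K n) {i j : ℕ} (r : Idx n i) (k : Idx n j) :
    bprod A B i j r k = ∑ i₁ : Fin (i + 1), ∑ j₁ : Fin (j + 1),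
      ∑ p : Idx n j₁, ∑ q : Idx n (j - j₁), ∑ p' : Idx n i₁, ∑ q' : Idx n (i - i₁),
        if (∀ c, (p.1 c : ℕ) + q.1 c = k.1 c) ∧ (∀ c, (p'.1 c : ℕ) + q'.1 c = r.1 c)
        then (∏ c, ((k.1 c : ℕ).choose (p.1 c) : K)) * (A i₁ j₁ p' p * B (i - i₁) (j - j₁) q' q)
        else 0 := by
  simp only [bprod, Matrix.sum_apply]
  refine sum_congr rfl fun i₁ _ => sum_congr rfl fun j₁ _ => ?_
  have hj₁ : (j₁ : ℕ) ≤ j := Nat.lt_succ_iff.mp j₁.isLt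
  have hchoose : (((j₁ + (j - j₁) : ℕ).choose j₁ : ℕ) : K) = j.choose j₁ := by
    rw [Nat.add_sub_cancel' hj₁]
  rw [Matrix.smul_apply, castM_apply, msym, Matrix.of_apply, smul_eq_mul, ← mul_assoc, hchoose,
    mul_inv_cancel₀ (by exact_mod_cast (Nat.choose_pos hj₁).ne'), one_mul]
  refine sum_congr rfl fun p _ => sum_congr rfl fun q _ => ?_
  by_cases hk : ∀ c, (p.1 c : ℕ) + q.1 c = k.1 c
  · simp [hk, vmul, mul_sum]
  · simp [hk]

theorem toMvPowerSeries_bprod [CharZero K] (A B : BlockMat K n) :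
    toMvPowerSeries (bprod A B) = toMvPowerSeries A * toMvPowerSeries B := by
  ext m
  obtain ⟨i, j, r, k, rfl⟩ := exists_exponent_eq m
  rw [MvPowerSeries.coeff_mul, sum_antidiagonal_exponent (fun x y =>
    MvPowerSeries.coeff x (toMvPowerSeries A) * MvPowerSeries.coeff y (toMvPowerSeries B)),
    coeff_toMvPowerSeries, bprod_apply]
  simp only [mul_sum]
  refine sum_congr rfl fun i₁ _ => sum_congr rfl fun j₁ _ => sum_congr rfl fun p _ =>
    sum_congr rfl fun q _ => sum_congr rfl fun p' _ => sum_congr rfl fun q' _ => ?_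
  split_ifs with h
  · simp only [coeff_toMvPowerSeries, ← h.1]
    exact inv_prod_factorial_add_mul _ _ _ _
  · exact mul_zero _

end BlockMat

/-- `(Mat(K), +, ⊙)` is a commutative unital associative `K`-algebra and an integral
domain: `⊙` is commutative and associative, compatible with scalars, `bone` is its
identity, and there are no zero divisors. -/
theorem blockMat_integral_domain (K : Type) [Field K] [CharZero K] (n : ℕ) :
    (∀ A B : BlockMat K n, bprod A B = bprod B A) ∧
    (∀ A B C : BlockMat K n, bprod (bprod A B) C = bprod A (bprod B C)) ∧
    (∀ (c : K) (A B : BlockMat K n), bprod (c • A) B = c • bprod A B) ∧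
    (∀ A : BlockMat K n, bprod (bone n) A = A) ∧
    (∀ A B : BlockMat K n, bprod A B = 0 → A = 0 ∨ B = 0) := by
  have hmul := BlockMat.toMvPowerSeries_bprod (K := K) (n := n)
  have hinj := BlockMat.toMvPowerSeries_injective (K := K) (n := n)
  refine ⟨fun A B => hinj ?_, fun A B C => hinj ?_, fun c A B => hinj ?_, fun A => hinj ?_,
    fun A B h => ?_⟩
  · rw [hmul, hmul, mul_comm]
  · rw [hmul, hmul, hmul, hmul, mul_assoc]
  · rw [hmul, map_smul, map_smul, hmul, smul_mul_assoc]
  · rw [hmul, BlockMat.toMvPowerSeries_bone, one_mul]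
  · have h0 : BlockMat.toMvPowerSeries A * BlockMat.toMvPowerSeries B = 0 := by
      rw [← hmul, h, map_zero]
    simpa only [mul_eq_zero, LinearMap.map_eq_zero_iff _ hinj] using h0
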